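/- Let F be a field and r ≥ 2 an integer. Let A = (a_{ij}) be an r×r matrix over F whose characteristic polynomial has r distinct roots in F. Suppose w ∈ F and z = (z_1, …, z_{r-1}) ∈ F^{r-1} satisfy A·(z_1, …, z_{r-1}, 1)^T = w·(z_1, …, z_{r-1}, 1)^T. Then the (r-1)×(r-1) matrix M over F with entries M_{ij} = a_{ij} − z_i·a_{rj} − w·δ_{ij} (where δ_{ij} is the Kronecker delta) is invertible. -/

import Mathlib

/-!
Completing the eigenvector `(z, 1)` of `A` to a basis by the first `r - 1` standard vectors
conjugates `A` into the block lower triangular matrix `[[N, 0], [*, w]]` with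
`N i j = a_ij - z_i a_rj`. Hence `χ_A = χ_N · (X - w)`, and since `χ_A` has simple roots,
`w` is not a root of `χ_N`, i.e. `M = N - w` is invertible.
-/

open Polynomial Matrix

namespace Polynomial

variable {R : Type*} [CommRing R] [IsDomain R]

theorem nodup_roots_of_card_toFinset_roots_eq_natDegree [DecidableEq R] {p : R[X]}
    (h : p.roots.toFinset.card = p.natDegree) : p.roots.Nodup :=
  Multiset.toFinset_card_eq_card_iff_nodup.mp <|
    le_antisymm (Multiset.toFinset_card_le _) (h ▸ p.card_roots')

theorem not_isRoot_of_nodup_roots_mul_X_sub_C {q : R[X]} {a : R} (hq : q ≠ 0)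
    (h : (q * (X - C a)).roots.Nodup) : ¬q.IsRoot a := by
  rw [roots_mul (mul_ne_zero hq (X_sub_C_ne_zero a)), roots_X_sub_C, add_comm,
    Multiset.singleton_add, Multiset.nodup_cons, mem_roots hq] at h
  exact h.1

end Polynomial

namespace Matrix

variable {R : Type*} [CommRing R]

/-- The hypotheses say that `A` maps the columns of `fromRows Z 1` into their span, acting there
by `W`; conjugating by the shear `fromBlocks 1 Z 0 1` makes `A` block lower triangular. -/
theorem charpoly_fromBlocks_of_mul_fromRows_eq {n o : Type*} [Fintype n] [DecidableEq n]
    [Fintype o] [DecidableEq o] (A₁₁ : Matrix n n R) (A₁₂ : Matrix n o R)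
    (A₂₁ : Matrix o n R) (A₂₂ : Matrix o o R) (Z : Matrix n o R) (W : Matrix o o R)
    (h₁ : A₁₁ * Z + A₁₂ = Z * W) (h₂ : A₂₁ * Z + A₂₂ = W) :
    (fromBlocks A₁₁ A₁₂ A₂₁ A₂₂).charpoly = (A₁₁ - Z * A₂₁).charpoly * W.charpoly := by
  have hinv : fromBlocks 1 Z 0 1 * fromBlocks 1 (-Z) 0 1 = (1 : Matrix (n ⊕ o) (n ⊕ o) R) := by
    simp [fromBlocks_multiply, fromBlocks_one]
  have hconj : fromBlocks 1 (-Z) 0 1 * (fromBlocks A₁₁ A₁₂ A₂₁ A₂₂ * fromBlocks 1 Z 0 1)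
      = fromBlocks (A₁₁ - Z * A₂₁) 0 A₂₁ W := by
    simp [fromBlocks_multiply, h₁, h₂, sub_eq_add_neg]
  rw [← charpoly_fromBlocks_zero₁₂, ← hconj, charpoly_mul_comm, Matrix.mul_assoc, hinv,
    Matrix.mul_one]

theorem charpoly_eq_mul_X_sub_C_of_mulVec_snoc {m : ℕ} (A : Matrix (Fin (m + 1)) (Fin (m + 1)) R)
    (w : R) (z : Fin m → R) (h : A *ᵥ Fin.snoc z 1 = w • Fin.snoc z 1) :
    A.charpoly = (of fun i j => A i.castSucc j.castSucc - z i * A (Fin.last m) j.castSucc).charpoly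
      * (X - C w) := by
  have hrow (i : Fin (m + 1)) :
      ∑ j : Fin m, A i j.castSucc * z j + A i (Fin.last m) =
        w * Fin.snoc (α := fun _ => R) z 1 i := by
    simpa [mulVec, dotProduct, Fin.sum_univ_castSucc] using congrFun h i
  have hcast (j : Fin m) : Fin.castAdd 1 j = j.castSucc := rfl
  have hlast (k : Fin 1) : Fin.natAdd m k = Fin.last m := Fin.ext (by simp [Subsingleton.elim k 0])
  rw [← charpoly_reindex finSumFinEquiv.symm, ← fromBlocks_toBlocks (reindex _ _ A),
    charpoly_fromBlocks_of_mul_fromRows_eq _ _ _ _ (of fun i (_ : Fin 1) => z i) (of fun _ _ => w)]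
  · congr 1
    · congr 1
      ext i j
      simp [toBlocks₁₁, toBlocks₂₁, mul_apply, hcast, hlast]
    · simp [charpoly, det_unique]
  · ext i k
    simpa [toBlocks₁₁, toBlocks₁₂, mul_apply, mul_comm, hcast, hlast] using hrow i.castSucc
  · ext k k'
    simpa [toBlocks₂₁, toBlocks₂₂, mul_apply, hcast, hlast] using hrow (Fin.last m)

end Matrix

theorem stmt1_general {F : Type*} [Field F] [DecidableEq F] (m : ℕ)
    (A : Matrix (Fin (m + 1)) (Fin (m + 1)) F)
    (hroots : (Matrix.charpoly A).roots.toFinset.card = m + 1)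
    (w : F) (z : Fin m → F)
    (heig : A.mulVec (Fin.snoc z 1 : Fin (m + 1) → F) = w • (Fin.snoc z 1 : Fin (m + 1) → F))
    (M : Matrix (Fin m) (Fin m) F)
    (hM : ∀ i j : Fin m,
      M i j = A i.castSucc j.castSucc - z i * A (Fin.last m) j.castSucc -
        w * (if i = j then 1 else 0)) :
    IsUnit M.det := by
  set N : Matrix (Fin m) (Fin m) F :=
    of fun i j => A i.castSucc j.castSucc - z i * A (Fin.last m) j.castSucc
  have hfactor : A.charpoly = N.charpoly * (X - C w) :=
    charpoly_eq_mul_X_sub_C_of_mulVec_snoc A w z heig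
  have hnodup : A.charpoly.roots.Nodup :=
    nodup_roots_of_card_toFinset_roots_eq_natDegree (by simpa [charpoly_natDegree_eq_dim])
  have hw : ¬N.charpoly.IsRoot w :=
    not_isRoot_of_nodup_roots_mul_X_sub_C (charpoly_monic N).ne_zero (hfactor ▸ hnodup)
  have hMN : M = -(scalar (Fin m) w - N) := by
    ext i j
    simp [hM, N, diagonal_apply]
  rw [hMN, det_neg, ← eval_charpoly]
  exact (isUnit_neg_one.pow _).mul (isUnit_iff_ne_zero.mpr hw)

/-- Let `F` be a field and `r = m+1 ≥ 2`. Let `A` be an `r × r`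
matrix over `F` whose characteristic polynomial has `r` distinct roots in `F`.
If `w ∈ F` and `z ∈ F^{r-1}` satisfy `A·(z,1)ᵀ = w·(z,1)ᵀ`, then the
`(r-1)×(r-1)` matrix `M` with `M i j = a_{ij} - z_i a_{rj} - w δ_{ij}` is invertible. -/
theorem stmt1 {F : Type*} [Field F] [DecidableEq F] (m : ℕ) (hm : 1 ≤ m)
    (A : Matrix (Fin (m + 1)) (Fin (m + 1)) F)
    (hroots : (Matrix.charpoly A).roots.toFinset.card = m + 1)
    (w : F) (z : Fin m → F)
    (heig : A.mulVec (Fin.snoc z 1 : Fin (m + 1) → F) = w • (Fin.snoc z 1 : Fin (m + 1) → F))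
    (M : Matrix (Fin m) (Fin m) F)
    (hM : ∀ i j : Fin m,
      M i j = A i.castSucc j.castSucc - z i * A (Fin.last m) j.castSucc -
        w * (if i = j then 1 else 0)) :
    IsUnit M.det :=
  stmt1_general m A hroots w z heig M hM
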